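/- arXiv:1406.7530 — 2 statements merged into one kernel-verified Lean document; each statement's English description precedes it below -/
import Mathlib

section
/- Let f be a Γ-periodic function on ℝ^d with f ∈ L²(Ω), and let [f^ε] denote multiplication by f(x/ε). Then for every ε > 0 the operator [f^ε]S_ε is bounded on L²(ℝ^d;ℂ^m) and ‖[f^ε]S_ε‖_{L²(ℝ^d)→L²(ℝ^d)} ≤ |Ω|^{-1/2} ‖f‖_{L²(Ω)}. -/
noncomputable section

open MeasureTheory Complex Real Set
open Pointwise
open scoped ENNReal

namespace PaperHomog

abbrev Rd (d : ℕ) := EuclideanSpace ℝ (Fin d)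
abbrev Vc (k : ℕ) := EuclideanSpace ℂ (Fin k)

/-- Matrix–vector multiplication on euclidean coordinate spaces. -/
def mv {p q : ℕ} (M : Matrix (Fin p) (Fin q) ℂ) (v : Vc q) : Vc p :=
  (WithLp.equiv 2 (Fin p → ℂ)).symm (M.mulVec ((WithLp.equiv 2 (Fin q → ℂ)) v))

/-- The differential operator `D_j = -i ∂_j`. -/
def Dj {d k : ℕ} (j : Fin d) (f : Rd d → Vc k) (x : Rd d) : Vc k :=
  (-Complex.I) • (fderiv ℝ f x (EuclideanSpace.single j (1 : ℝ)))

/-- The operator `b(D) = ∑ b_l D_l`. -/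
def bD {d n m : ℕ} (bb : Fin d → Matrix (Fin m) (Fin n) ℂ) (f : Rd d → Vc n) (x : Rd d) :
    Vc m :=
  ∑ j : Fin d, mv (bb j) (Dj j f x)

/-- The symbol `b(ξ)` for real `ξ`. -/
def symb {d n m : ℕ} (bb : Fin d → Matrix (Fin m) (Fin n) ℂ) (ξ : Fin d → ℝ) :
    Matrix (Fin m) (Fin n) ℂ :=
  ∑ l : Fin d, (ξ l : ℂ) • bb l

/-- The symbol `b(ξ)` for complex `ξ`. -/
def symbC {d n m : ℕ} (bb : Fin d → Matrix (Fin m) (Fin n) ℂ) (ξ : Fin d → ℂ) :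
    Matrix (Fin m) (Fin n) ℂ :=
  ∑ l : Fin d, ξ l • bb l

/-- Squared `L²(E)` norm. -/
def l2sq {d k : ℕ} (E : Set (Rd d)) (f : Rd d → Vc k) : ℝ := ∫ x in E, ‖f x‖ ^ 2

/-- `L²(E)` norm. -/
def l2n {d k : ℕ} (E : Set (Rd d)) (f : Rd d → Vc k) : ℝ := Real.sqrt (l2sq E f)

/-- Squared euclidean norm of the full gradient at a point. -/
def gradsq {d k : ℕ} (f : Rd d → Vc k) (x : Rd d) : ℝ :=
  ∑ j : Fin d, ‖fderiv ℝ f x (EuclideanSpace.single j (1 : ℝ))‖ ^ 2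

def dl2sq {d k : ℕ} (E : Set (Rd d)) (f : Rd d → Vc k) : ℝ := ∫ x in E, gradsq f x

def dl2n {d k : ℕ} (E : Set (Rd d)) (f : Rd d → Vc k) : ℝ := Real.sqrt (dl2sq E f)

/-- `H¹(E)` norm. -/
def h1n {d k : ℕ} (E : Set (Rd d)) (f : Rd d → Vc k) : ℝ :=
  Real.sqrt (l2sq E f + dl2sq E f)

/-- Squared norm of the Hessian at a point. -/
def hesssq {d k : ℕ} (f : Rd d → Vc k) (x : Rd d) : ℝ :=
  ∑ j : Fin d, ∑ l : Fin d,
    ‖fderiv ℝ (fun y => fderiv ℝ f y (EuclideanSpace.single j (1 : ℝ))) x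
        (EuclideanSpace.single l (1 : ℝ))‖ ^ 2

/-- `H²(E)` norm. -/
def h2n {d k : ℕ} (E : Set (Rd d)) (f : Rd d → Vc k) : ℝ :=
  Real.sqrt (l2sq E f + dl2sq E f + ∫ x in E, hesssq f x)

/-- Membership in `L²(E)`. -/
def InL2 {d k : ℕ} (E : Set (Rd d)) (f : Rd d → Vc k) : Prop :=
  Integrable (fun x => ‖f x‖ ^ 2) (volume.restrict E)

/-- Membership in `H¹(E)` (classical-derivative model of the Sobolev space). -/
def InH1 {d k : ℕ} (E : Set (Rd d)) (f : Rd d → Vc k) : Prop :=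
  (∀ x ∈ E, DifferentiableAt ℝ f x) ∧
  Integrable (fun x => ‖f x‖ ^ 2) (volume.restrict E) ∧
  Integrable (fun x => gradsq f x) (volume.restrict E)

/-- Membership in `H¹₀(O)`: an `H¹(ℝ^d)` function vanishing outside `O`. -/
def InH10 {d k : ℕ} (O : Set (Rd d)) (f : Rd d → Vc k) : Prop :=
  InH1 Set.univ f ∧ ∀ x, x ∉ O → f x = 0

/-- The constant `c(φ)`. -/
def cphi (φ : ℝ) : ℝ :=
  if φ ∈ Set.Ioo 0 (π / 2) ∪ Set.Ioo (3 * π / 2) (2 * π) then |Real.sin φ|⁻¹ else 1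

/-- `ζ = |ζ| e^{iφ}` with `φ ∈ (0, 2π)`. -/
def ArgIs (ζ : ℂ) (φ : ℝ) : Prop :=
  φ ∈ Set.Ioo 0 (2 * π) ∧ ζ = (‖ζ‖ : ℂ) * Complex.exp (φ * Complex.I)

/-- `ζ ∈ ℂ ∖ ℝ₊`. -/
def NotPosReal (ζ : ℂ) : Prop := ∀ t : ℝ, 0 ≤ t → ζ ≠ (t : ℂ)

/-- The Steklov smoothing operator `S_ε`. -/
def Sm {d k : ℕ} (Ω : Set (Rd d)) (ε : ℝ) (f : Rd d → Vc k) (x : Rd d) : Vc k :=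
  ((volume Ω).toReal)⁻¹ • ∫ z in Ω, f (x - ε • z)

/-- The lattice generated by the basis `a`. -/
def lattice {d : ℕ} (a : Fin d → Rd d) : Set (Rd d) :=
  {γ | ∃ ν : Fin d → ℤ, γ = ∑ j : Fin d, (ν j : ℝ) • a j}

/-- The elementary cell of the lattice generated by `a`. -/
def cell {d : ℕ} (a : Fin d → Rd d) : Set (Rd d) :=
  {x | ∃ τ : Fin d → ℝ, (∀ j, |τ j| < 1 / 2) ∧ x = ∑ j : Fin d, τ j • a j}

/-- Γ-periodicity of a function. -/
def GammaPeriodic {d : ℕ} {α : Type*} (a : Fin d → Rd d) (f : Rd d → α) : Prop :=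
  ∀ γ ∈ lattice a, ∀ x, f (x + γ) = f x

/-- Column `c` of a matrix-valued function, as a vector-valued function. -/
def matCol {d n m : ℕ} (Λ : Rd d → Matrix (Fin n) (Fin m) ℂ) (c : Fin m) (x : Rd d) :
    Vc n :=
  (WithLp.equiv 2 (Fin n → ℂ)).symm (fun r => Λ x r c)

/-- Column `c` of a matrix, as a euclidean vector. -/
def mcol {p q : ℕ} (M : Matrix (Fin p) (Fin q) ℂ) (c : Fin q) : Vc p :=
  (WithLp.equiv 2 (Fin p → ℂ)).symm (fun i => M i c)

/-- `b(D)Λ` for a matrix-valued `Λ`, computed columnwise. -/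
def bDmat {d n m : ℕ} (bb : Fin d → Matrix (Fin m) (Fin n) ℂ)
    (Λ : Rd d → Matrix (Fin n) (Fin m) ℂ) (x : Rd d) : Matrix (Fin m) (Fin m) ℂ :=
  fun i c => bD bb (matCol Λ c) x i

/-- `g̃(x) = g(x) (b(D)Λ(x) + 1)`. -/
def gtld {d n m : ℕ} (g : Rd d → Matrix (Fin m) (Fin m) ℂ)
    (bb : Fin d → Matrix (Fin m) (Fin n) ℂ) (Λ : Rd d → Matrix (Fin n) (Fin m) ℂ)
    (x : Rd d) : Matrix (Fin m) (Fin m) ℂ :=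
  g x * (bDmat bb Λ x + 1)

/-- The effective matrix `g⁰`. -/
def geff {d n m : ℕ} (a : Fin d → Rd d) (g : Rd d → Matrix (Fin m) (Fin m) ℂ)
    (bb : Fin d → Matrix (Fin m) (Fin n) ℂ) (Λ : Rd d → Matrix (Fin n) (Fin m) ℂ) :
    Matrix (Fin m) (Fin m) ℂ :=
  fun i c => (((volume (cell a)).toReal)⁻¹ : ℂ) * ∫ x in cell a, gtld g bb Λ x i c

/-- Standing assumptions on `g`: measurable, Hermitian values, `‖g‖_{L∞} ≤ gmax`,
uniformly positive definite with `‖g⁻¹‖_{L∞} ≤ ginv`. -/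
def GoodG {d m : ℕ} (g : Rd d → Matrix (Fin m) (Fin m) ℂ) (gmax ginv : ℝ) : Prop :=
  (∀ i j, Measurable fun x => g x i j) ∧ (∀ x, (g x).IsHermitian) ∧
  (∀ x, ∀ v : Vc m, ‖mv (g x) v‖ ≤ gmax * ‖v‖) ∧
  (∀ x, ∀ v : Vc m, ginv⁻¹ * ‖v‖ ^ 2 ≤ (inner ℂ v (mv (g x) v) : ℂ).re)

/-- Condition (1.4) on the symbol: `α₀ 1 ≤ b(θ)* b(θ) ≤ α₁ 1` on the unit sphere. -/
def SymbCond {d n m : ℕ} (bb : Fin d → Matrix (Fin m) (Fin n) ℂ) (α₀ α₁ : ℝ) : Prop :=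
  ∀ θ : Fin d → ℝ, (∑ l : Fin d, θ l ^ 2) = 1 →
    ∀ v : Vc n, α₀ * ‖v‖ ^ 2 ≤ ‖mv (symb bb θ) v‖ ^ 2 ∧
      ‖mv (symb bb θ) v‖ ^ 2 ≤ α₁ * ‖v‖ ^ 2

/-- Weak solution of `b(D)* gg b(D) u - ζ u = F` in `ℝ^d`. -/
def IsWeakSolRd {d n m : ℕ} (gg : Rd d → Matrix (Fin m) (Fin m) ℂ)
    (bb : Fin d → Matrix (Fin m) (Fin n) ℂ) (ζ : ℂ) (F u : Rd d → Vc n) : Prop :=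
  InH1 Set.univ u ∧
  ∀ η : Rd d → Vc n, InH1 Set.univ η →
    (∫ x, (inner ℂ (bD bb η x) (mv (gg x) (bD bb u x)) : ℂ)) -
        ζ * (∫ x, (inner ℂ (η x) (u x) : ℂ)) = ∫ x, (inner ℂ (η x) (F x) : ℂ)

/-- Weak solution of the Dirichlet problem on `O`. -/
def IsWeakSolD {d n m : ℕ} (O : Set (Rd d)) (gg : Rd d → Matrix (Fin m) (Fin m) ℂ)
    (bb : Fin d → Matrix (Fin m) (Fin n) ℂ) (ζ : ℂ) (F u : Rd d → Vc n) : Prop :=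
  InH10 O u ∧
  ∀ η : Rd d → Vc n, InH10 O η →
    (∫ x in O, (inner ℂ (bD bb η x) (mv (gg x) (bD bb u x)) : ℂ)) -
        ζ * (∫ x in O, (inner ℂ (η x) (u x) : ℂ)) = ∫ x in O, (inner ℂ (η x) (F x) : ℂ)

/-- Weak solution of the Neumann problem on `O`. -/
def IsWeakSolN {d n m : ℕ} (O : Set (Rd d)) (gg : Rd d → Matrix (Fin m) (Fin m) ℂ)
    (bb : Fin d → Matrix (Fin m) (Fin n) ℂ) (ζ : ℂ) (F u : Rd d → Vc n) : Prop :=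
  InH1 O u ∧
  ∀ η : Rd d → Vc n, InH1 O η →
    (∫ x in O, (inner ℂ (bD bb η x) (mv (gg x) (bD bb u x)) : ℂ)) -
        ζ * (∫ x in O, (inner ℂ (η x) (u x) : ℂ)) = ∫ x in O, (inner ℂ (η x) (F x) : ℂ)

/-- `Λ` solves the periodic cell problem (1.7). -/
def IsCellSol {d n m : ℕ} (a : Fin d → Rd d) (g : Rd d → Matrix (Fin m) (Fin m) ℂ)
    (bb : Fin d → Matrix (Fin m) (Fin n) ℂ) (Λ : Rd d → Matrix (Fin n) (Fin m) ℂ) :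
    Prop :=
  GammaPeriodic a Λ ∧
  (∀ c : Fin m, Differentiable ℝ (matCol Λ c)) ∧
  (∀ c : Fin m, Integrable (fun x => ‖matCol Λ c x‖ ^ 2) (volume.restrict (cell a))) ∧
  (∀ c : Fin m, Integrable (fun x => gradsq (matCol Λ c) x) (volume.restrict (cell a))) ∧
  (∀ r : Fin n, ∀ c : Fin m, (∫ x in cell a, Λ x r c) = 0) ∧
  (∀ η : Rd d → Vc n, Differentiable ℝ η → GammaPeriodic a η →
    ∀ c : Fin m, (∫ x in cell a, (inner ℂ (bD bb η x) (mcol (gtld g bb Λ x) c) : ℂ)) = 0)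

/-- A `ρ`-neighborhood of `∂O` is covered by finitely many open sets on which C¹
diffeomorphisms rectify the boundary. -/
def RectC1 {d : ℕ} (hd : 0 < d) (O : Set (Rd d)) (ρ : ℝ) : Prop :=
  ∃ (N : ℕ) (U : Fin N → Set (Rd d)),
    (∀ i, IsOpen (U i)) ∧
    Metric.thickening ρ (frontier O) ⊆ (⋃ i, U i) ∧
    ∀ i, ∃ Φ Ψ : Rd d → Rd d,
      ContDiffOn ℝ 1 Φ (U i) ∧ Set.InjOn Φ (U i) ∧ IsOpen (Φ '' U i) ∧
      ContDiffOn ℝ 1 Ψ (Φ '' U i) ∧ (∀ x ∈ U i, Ψ (Φ x) = x) ∧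
      (∀ x ∈ U i, (x ∈ O ↔ 0 < Φ x ⟨0, hd⟩)) ∧
      (∀ x ∈ U i, (x ∈ frontier O ↔ Φ x ⟨0, hd⟩ = 0))

/-- A `ρ`-neighborhood of `∂O` is covered by finitely many open sets on which C^{1,1}
diffeomorphisms rectify the boundary. -/
def RectC11 {d : ℕ} (hd : 0 < d) (O : Set (Rd d)) (ρ : ℝ) : Prop :=
  ∃ (N : ℕ) (U : Fin N → Set (Rd d)),
    (∀ i, IsOpen (U i)) ∧
    Metric.thickening ρ (frontier O) ⊆ (⋃ i, U i) ∧
    ∀ i, ∃ (Φ Ψ : Rd d → Rd d) (K : NNReal),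
      ContDiffOn ℝ 1 Φ (U i) ∧ LipschitzOnWith K (fderiv ℝ Φ) (U i) ∧
      Set.InjOn Φ (U i) ∧ IsOpen (Φ '' U i) ∧
      ContDiffOn ℝ 1 Ψ (Φ '' U i) ∧ LipschitzOnWith K (fderiv ℝ Ψ) (Φ '' U i) ∧
      (∀ x ∈ U i, Ψ (Φ x) = x) ∧
      (∀ x ∈ U i, (x ∈ O ↔ 0 < Φ x ⟨0, hd⟩)) ∧
      (∀ x ∈ U i, (x ∈ frontier O ↔ Φ x ⟨0, hd⟩ = 0))

/-- `O` is a bounded domain of class C^{1,1}. -/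
def C11Domain {d : ℕ} (hd : 0 < d) (O : Set (Rd d)) : Prop :=
  IsOpen O ∧ Bornology.IsBounded O ∧ O.Nonempty ∧ ∃ ρ : ℝ, 0 < ρ ∧ RectC11 hd O ρ

namespace Aux6

open Submodule

variable {d : ℕ} {a : Fin d → Rd d}

def bas (hd : 0 < d) (ha : LinearIndependent ℝ a) : Module.Basis (Fin d) ℝ (Rd d) :=
  haveI : Nonempty (Fin d) := ⟨⟨0, hd⟩⟩
  basisOfLinearIndependentOfCardEqFinrank ha (by simp)

lemma bas_apply (hd : 0 < d) (ha : LinearIndependent ℝ a) (j : Fin d) : bas hd ha j = a j := by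
  simp [bas, coe_basisOfLinearIndependentOfCardEqFinrank]

lemma repr_sum (hd : 0 < d) (ha : LinearIndependent ℝ a) (τ : Fin d → ℝ) (j : Fin d) :
    (bas hd ha).repr (∑ i, τ i • a i) j = τ j := by
  have h : (∑ i, τ i • a i) = ∑ i, τ i • (bas hd ha) i := by
    simp only [bas_apply]
  rw [h, (bas hd ha).repr_sum_self]

lemma mem_cell_iff (hd : 0 < d) (ha : LinearIndependent ℝ a) {x : Rd d} :
    x ∈ cell a ↔ ∀ j, |(bas hd ha).repr x j| < 1 / 2 := by
  constructor
  · rintro ⟨τ, hτ, rfl⟩ j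
    rw [repr_sum hd ha]; exact hτ j
  · intro h
    refine ⟨fun j => (bas hd ha).repr x j, h, ?_⟩
    conv_lhs => rw [← (bas hd ha).sum_repr x]
    simp only [bas_apply]

lemma mem_span_iff (hd : 0 < d) (ha : LinearIndependent ℝ a) {x : Rd d} :
    x ∈ span ℤ (Set.range a) ↔ ∃ ν : Fin d → ℤ, x = ∑ j, (ν j : ℝ) • a j := by
  rw [mem_span_range_iff_exists_fun]
  constructor
  · rintro ⟨ν, h⟩
    exact ⟨ν, by rw [← h]; exact Finset.sum_congr rfl fun i _ => (Int.cast_smul_eq_zsmul ℝ _ _).symm⟩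
  · rintro ⟨ν, rfl⟩
    exact ⟨ν, Finset.sum_congr rfl fun i _ => (Int.cast_smul_eq_zsmul ℝ _ _).symm⟩

lemma span_sub_lattice (hd : 0 < d) (ha : LinearIndependent ℝ a) {x : Rd d}
    (hx : x ∈ span ℤ (Set.range a)) : x ∈ lattice a := by
  obtain ⟨ν, rfl⟩ := (mem_span_iff hd ha).mp hx
  exact ⟨ν, rfl⟩

lemma repr_continuous (hd : 0 < d) (ha : LinearIndependent ℝ a) (j : Fin d) :
    Continuous fun x : Rd d => (bas hd ha).repr x j :=
  LinearMap.continuous_of_finiteDimensional ((bas hd ha).coord j)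

lemma cell_measurable (hd : 0 < d) (ha : LinearIndependent ℝ a) : MeasurableSet (cell a) := by
  have h : cell a = ⋂ j, (fun x : Rd d => (bas hd ha).repr x j) ⁻¹' (Ioo (-(1/2)) (1/2)) := by
    ext x
    rw [mem_cell_iff hd ha]
    simp [abs_lt, mem_Ioo]
  rw [h]
  exact MeasurableSet.iInter fun j =>
    (repr_continuous hd ha j).measurable measurableSet_Ioo

lemma hyp_null (hd : 0 < d) (ha : LinearIndependent ℝ a) (j : Fin d) (c : ℝ) :
    volume {x : Rd d | (bas hd ha).repr x j = c} = 0 := by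
  have hker : LinearMap.ker ((bas hd ha).coord j) ≠ ⊤ := by
    intro h
    have h1 : (bas hd ha).coord j (bas hd ha j) = 0 := by
      rw [← LinearMap.mem_ker, h]; trivial
    rw [Module.Basis.coord_apply, Module.Basis.repr_self, Finsupp.single_eq_same] at h1
    exact one_ne_zero h1
  have h1 : {x : Rd d | (bas hd ha).repr x j = c}
      = (c • bas hd ha j) +ᵥ ((LinearMap.ker ((bas hd ha).coord j) : Submodule ℝ (Rd d)) : Set (Rd d)) := by
    ext x
    rw [Set.mem_vadd_set_iff_neg_vadd_mem]
    simp only [vadd_eq_add, SetLike.mem_coe, LinearMap.mem_ker, map_add, map_neg,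
      _root_.map_smul, Finsupp.smul_apply, Finsupp.coe_add, Finsupp.coe_neg, Pi.add_apply,
      Pi.neg_apply, Module.Basis.coord_apply, Module.Basis.repr_self, Finsupp.single_eq_same, mem_setOf_eq,
      smul_eq_mul, mul_one]
    constructor
    · intro h; rw [h]; ring
    · intro h; linarith
  rw [h1, measure_vadd]
  exact Measure.addHaar_submodule _ _ hker


lemma repr_of_span (hd : 0 < d) (ha : LinearIndependent ℝ a)
    (g : span ℤ (Set.range a)) :
    ∃ ν : Fin d → ℤ, (g : Rd d) = ∑ j, (ν j : ℝ) • a j ∧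
      ∀ j, (bas hd ha).repr (g : Rd d) j = ν j := by
  obtain ⟨ν, hg⟩ := (mem_span_iff hd ha).mp g.2
  exact ⟨ν, hg, fun j => by rw [hg, repr_sum hd ha]⟩

lemma isFD (hd : 0 < d) (ha : LinearIndependent ℝ a) (w : Rd d) :
    IsAddFundamentalDomain (span ℤ (Set.range a)) (w +ᵥ cell a) (volume : Measure (Rd d)) := by
  constructor
  · exact ((cell_measurable hd ha).const_vadd w).nullMeasurableSet
  · -- ae_covers
    set B : Set (Rd d) :=
      ⋃ j : Fin d, ⋃ n : ℤ, {x : Rd d | (bas hd ha).repr (x - w) j = (n : ℝ) - 1/2} with hBdef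
    have hB : volume B = 0 := by
      refine measure_iUnion_null fun j => measure_iUnion_null fun n => ?_
      have h1 : {x : Rd d | (bas hd ha).repr (x - w) j = (n : ℝ) - 1/2}
          = (fun x : Rd d => x + (-w)) ⁻¹' {y : Rd d | (bas hd ha).repr y j = (n : ℝ) - 1/2} := by
        ext x; simp [sub_eq_add_neg]
      rw [h1]
      exact (measurePreserving_add_right volume (-w)).quasiMeasurePreserving.preimage_null
        (hyp_null hd ha j _)
    have hae : ∀ᵐ x : Rd d, x ∉ B := measure_eq_zero_iff_ae_notMem.mp hB
    refine hae.mono ?_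
    intro x hx
    simp only [hBdef, mem_iUnion, not_exists, mem_setOf_eq] at hx
    set r : Fin d → ℝ := fun j => (bas hd ha).repr (x - w) j with hr
    set ν : Fin d → ℤ := fun j => -⌊r j + 1/2⌋ with hν
    have hgmem : (∑ j, ((ν j : ℝ)) • a j) ∈ span ℤ (Set.range a) :=
      (mem_span_iff hd ha).mpr ⟨ν, rfl⟩
    refine ⟨⟨_, hgmem⟩, ?_⟩
    have hvadd : (⟨_, hgmem⟩ : span ℤ (Set.range a)) +ᵥ x = (∑ j, ((ν j : ℝ)) • a j) + x := rfl
    rw [hvadd, Set.mem_vadd_set_iff_neg_vadd_mem]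
    have hmem : -w +ᵥ ((∑ j, ((ν j : ℝ)) • a j) + x) = (∑ j, ((ν j : ℝ)) • a j) + (x - w) := by
      simp [vadd_eq_add, sub_eq_add_neg]; abel
    rw [hmem, mem_cell_iff hd ha]
    intro j
    have hrepr : (bas hd ha).repr ((∑ j, ((ν j : ℝ)) • a j) + (x - w)) j = (ν j : ℝ) + r j := by
      rw [map_add, Finsupp.add_apply]
      congr 1
      exact repr_sum hd ha _ j
    rw [hrepr]
    have hfl : (⌊r j + 1/2⌋ : ℝ) ≤ r j + 1/2 := Int.floor_le _
    have hfl2 : r j + 1/2 < ⌊r j + 1/2⌋ + 1 := Int.lt_floor_add_one _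
    have hne : r j ≠ (⌊r j + 1/2⌋ : ℝ) - 1/2 := hx j ⌊r j + 1/2⌋
    have : (ν j : ℝ) = -⌊r j + 1/2⌋ := by simp [hν]
    rw [this, abs_lt]
    constructor
    · rcases lt_or_eq_of_le (by linarith : (⌊r j + 1/2⌋ : ℝ) - 1/2 ≤ r j) with h | h
      · linarith
      · exact absurd h.symm hne
    · linarith
  · -- aedisjoint
    intro g₁ g₂ hne
    refine Disjoint.aedisjoint ?_
    rw [Set.disjoint_left]
    rintro y h1 h2
    obtain ⟨ν₁, hg1, hr1⟩ := repr_of_span hd ha g₁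
    obtain ⟨ν₂, hg2, hr2⟩ := repr_of_span hd ha g₂
    have hmem : ∀ (g : span ℤ (Set.range a)), y ∈ (g : Rd d) +ᵥ (w +ᵥ cell a) →
        ∀ j, |(bas hd ha).repr (y - w) j - (bas hd ha).repr (g : Rd d) j| < 1/2 := by
      intro g hg j
      rw [Set.mem_vadd_set_iff_neg_vadd_mem, Set.mem_vadd_set_iff_neg_vadd_mem] at hg
      rw [mem_cell_iff hd ha] at hg
      have := hg j
      have heq : -w +ᵥ (-(g : Rd d) +ᵥ y) = (y - w) - (g : Rd d) := by
        simp [vadd_eq_add, sub_eq_add_neg]; abel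
      rw [heq, map_sub, Finsupp.sub_apply] at this
      exact this
    have hj : ∀ j, ν₁ j = ν₂ j := by
      intro j
      have u1 := hmem g₁ h1 j
      have u2 := hmem g₂ h2 j
      rw [hr1 j] at u1
      rw [hr2 j] at u2
      have habs : |(ν₁ j : ℝ) - ν₂ j| < 1 := by
        rw [abs_lt] at u1 u2 ⊢
        constructor <;> [linarith; linarith]
      have : ((ν₁ j - ν₂ j : ℤ) : ℝ) = (ν₁ j : ℝ) - ν₂ j := by push_cast; ring
      have h5 : |((ν₁ j - ν₂ j : ℤ) : ℝ)| < 1 := by rw [this]; exact habs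
      have h6 : |ν₁ j - ν₂ j| < (1 : ℤ) := by exact_mod_cast h5
      rw [Int.abs_lt_one_iff] at h6
      omega
    apply hne
    apply Subtype.ext
    rw [hg1, hg2]
    exact Finset.sum_congr rfl fun j _ => by rw [hj j]


lemma periodic_shift (hd : 0 < d) (ha : LinearIndependent ℝ a) (φ : Rd d → ℝ≥0∞)
    (hper : ∀ γ ∈ lattice a, ∀ x, φ (x + γ) = φ x) (w : Rd d) :
    ∫⁻ z in cell a, φ (w + z) = ∫⁻ z in cell a, φ z := by
  have h0 : IsAddFundamentalDomain (span ℤ (Set.range a)) (cell a) (volume : Measure (Rd d)) := by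
    have := isFD hd ha 0
    rwa [zero_vadd] at this
  have hw := isFD hd ha w
  have hφ : ∀ (g : span ℤ (Set.range a)) (x : Rd d), φ (g +ᵥ x) = φ x := by
    intro g x
    have h1 : (g : Rd d) +ᵥ x = x + (g : Rd d) := by rw [vadd_eq_add, add_comm]
    rw [show (g +ᵥ x) = x + (g : Rd d) from h1]
    exact hper _ (span_sub_lattice hd ha g.2) x
  have hcv : ∫⁻ z in cell a, φ (w + z) = ∫⁻ y in w +ᵥ cell a, φ y := by
    have hemb : MeasurableEmbedding (fun z : Rd d => w + z) :=
      (MeasurableEquiv.addLeft w).measurableEmbedding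
    have hmp : MeasurePreserving (fun z : Rd d => w + z) volume volume :=
      measurePreserving_add_left volume w
    have hpre : (fun z : Rd d => w + z) ⁻¹' (w +ᵥ cell a) = cell a := by
      ext z
      rw [Set.mem_preimage, Set.mem_vadd_set_iff_neg_vadd_mem]
      simp
    conv_lhs => rw [show (fun z : Rd d => φ (w + z)) = fun z => φ ((fun z : Rd d => w + z) z) from rfl, ← hpre]
    exact hmp.setLIntegral_comp_preimage_emb hemb _ _
  haveI : MeasurableVAdd (span ℤ (Set.range a)) (Rd d) := by
    constructor
    · intro x
      exact (measurable_subtype_coe.add_const x)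
  haveI : VAddInvariantMeasure (span ℤ (Set.range a)) (Rd d) (volume : Measure (Rd d)) := by
    constructor
    intro c s hs
    show volume ((fun x : Rd d => (c : Rd d) + x) ⁻¹' s) = volume s
    rw [(measurePreserving_add_left volume (c : Rd d)).measure_preimage hs.nullMeasurableSet]
  rw [hcv]
  exact hw.setLIntegral_eq h0 φ hφ

lemma slice_null {N : Set (Rd d)} (hN : volume N = 0) (x : Rd d) {c : ℝ} (hc : c ≠ 0) :
    volume {z : Rd d | x + c • z ∈ N} = 0 := by
  have h1 : volume ((fun y : Rd d => x + y) ⁻¹' N) = 0 :=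
    (measurePreserving_add_left volume x).quasiMeasurePreserving.preimage_null hN
  have h2 : {z : Rd d | x + c • z ∈ N} = (c • ·) ⁻¹' ((fun y : Rd d => x + y) ⁻¹' N) := rfl
  rw [h2, Measure.addHaar_preimage_smul volume hc, h1, mul_zero]

lemma lint_cs {α : Type*} [MeasurableSpace α] (μ : Measure α) (f : α → ℝ≥0∞)
    (hf : AEMeasurable f μ) :
    (∫⁻ a, f a ∂μ) ^ 2 ≤ μ Set.univ * ∫⁻ a, f a ^ 2 ∂μ := by
  have hpq : (2 : ℝ).HolderConjugate 2 := Real.HolderConjugate.two_two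
  have h := ENNReal.lintegral_mul_le_Lp_mul_Lq μ hpq hf (aemeasurable_const (b := (1 : ℝ≥0∞)))
  simp only [Pi.mul_apply, mul_one, ENNReal.one_rpow, lintegral_const, one_mul] at h
  have h2 : (∫⁻ a, f a ∂μ) ^ 2 ≤
      ((∫⁻ a, f a ^ (2:ℝ) ∂μ) ^ (1/(2:ℝ)) * (μ Set.univ) ^ (1/(2:ℝ))) ^ 2 := by
    exact pow_le_pow_left' h 2
  refine h2.trans (le_of_eq ?_)
  rw [mul_pow, ← ENNReal.rpow_natCast ((∫⁻ a, f a ^ (2:ℝ) ∂μ) ^ (1/(2:ℝ))) 2,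
    ← ENNReal.rpow_natCast ((μ Set.univ) ^ (1/(2:ℝ))) 2, ← ENNReal.rpow_mul, ← ENNReal.rpow_mul]
  norm_num
  exact mul_comm _ _
end Aux6

theorem statement6
    (d mm : ℕ) (hd : 0 < d)
    (a : Fin d → Rd d) (ha : LinearIndependent ℝ a)
    (hvol : 0 < (volume (cell a)).toReal)
    (f : Rd d → ℂ) (hfmeas : Measurable f)
    (hfper : GammaPeriodic a f)
    (hfL2 : Integrable (fun x => ‖f x‖ ^ 2) (volume.restrict (cell a)))
    (ε : ℝ) (hε : 0 < ε) :
    ∀ u : Rd d → Vc mm, InL2 Set.univ u →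
      l2n Set.univ (fun x => f (ε⁻¹ • x) • Sm (cell a) ε u x) ≤
        Real.sqrt (((volume (cell a)).toReal)⁻¹ * ∫ x in cell a, ‖f x‖ ^ 2) *
          l2n Set.univ u := by
  intro u hu
  have hεne : ε ≠ 0 := ne_of_gt hε
  have hμfin : volume (cell a) ≠ ⊤ := by
    intro h; rw [h] at hvol; simp at hvol
  have hμ0 : volume (cell a) ≠ 0 := by
    intro h; rw [h] at hvol; simp at hvol
  have hu' : Integrable (fun x => ‖u x‖ ^ 2) (volume : Measure (Rd d)) := by
    have h := hu; rwa [InL2, Measure.restrict_univ] at h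
  have hK0 : 0 ≤ ∫ x in cell a, ‖f x‖ ^ 2 := integral_nonneg fun x => by positivity
  have hU0 : 0 ≤ ∫ x, ‖u x‖ ^ 2 ∂(volume : Measure (Rd d)) := integral_nonneg fun x => by positivity
  -- measurable representative of `ENNReal.ofReal ‖u ·‖`
  have hve : AEMeasurable (fun x : Rd d => ENNReal.ofReal ‖u x‖) volume := by
    have h2 : AEMeasurable (fun x : Rd d => ‖u x‖ ^ 2) volume :=
      hu'.aestronglyMeasurable.aemeasurable
    have h3 : AEMeasurable (fun x : Rd d => Real.sqrt (‖u x‖ ^ 2)) volume :=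
      Real.continuous_sqrt.measurable.comp_aemeasurable h2
    have h4 : (fun x : Rd d => Real.sqrt (‖u x‖ ^ 2)) = fun x : Rd d => ‖u x‖ := by
      funext x; exact Real.sqrt_sq (norm_nonneg _)
    rw [h4] at h3
    exact ENNReal.measurable_ofReal.comp_aemeasurable h3
  set χ : Rd d → ℝ≥0∞ := hve.mk _ with hχdef
  have hχmeas : Measurable χ := hve.measurable_mk
  have hχae : (fun x : Rd d => ENNReal.ofReal ‖u x‖) =ᵐ[volume] χ := hve.ae_eq_mk
  have hN : volume {x : Rd d | ¬ ENNReal.ofReal ‖u x‖ = χ x} = 0 := by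
    have h := hχae; rw [Filter.EventuallyEq, ae_iff] at h; exact h
  have hslice : ∀ x : Rd d,
      ∀ᵐ z ∂(volume.restrict (cell a)), ENNReal.ofReal ‖u (x - ε • z)‖ = χ (x - ε • z) := by
    intro x
    refine ae_restrict_of_ae ?_
    rw [ae_iff]
    have h1 : {z : Rd d | ¬ ENNReal.ofReal ‖u (x - ε • z)‖ = χ (x - ε • z)}
        = {z : Rd d | x + (-ε) • z ∈ {y : Rd d | ¬ ENNReal.ofReal ‖u y‖ = χ y}} := by
      ext z; simp [sub_eq_add_neg, neg_smul]
    rw [h1]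
    exact Aux6.slice_null hN x (neg_ne_zero.mpr hεne)
  -- ENNReal versions of `|f|²`
  set gE : Rd d → ℝ≥0∞ := fun t => ENNReal.ofReal (‖f t‖ ^ 2) with hgEdef
  have hgEmeas : Measurable gE := ENNReal.measurable_ofReal.comp (hfmeas.norm.pow_const 2)
  have hgEper : ∀ γ ∈ lattice a, ∀ x, gE (x + γ) = gE x := fun γ hγ x => by
    simp only [hgEdef, hfper γ hγ x]
  set Fe : Rd d → ℝ≥0∞ := fun x => gE (ε⁻¹ • x) with hFedef
  have hFemeas : Measurable Fe := hgEmeas.comp (measurable_const_smul ε⁻¹)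
  have hcE : ENNReal.ofReal (((volume (cell a)).toReal)⁻¹) = (volume (cell a))⁻¹ := by
    rw [ENNReal.ofReal_inv_of_pos hvol, ENNReal.ofReal_toReal hμfin]
  -- Step 1 : pointwise bound
  have step1 : ∀ x : Rd d, ENNReal.ofReal (‖f (ε⁻¹ • x) • Sm (cell a) ε u x‖ ^ 2)
      ≤ (volume (cell a))⁻¹ * (Fe x * ∫⁻ z in cell a, χ (x - ε • z) ^ 2) := by
    intro x
    have hmz : Measurable fun z : Rd d => χ (x - ε • z) :=
      hχmeas.comp (measurable_const.sub (measurable_id.const_smul ε))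
    have e1 : ENNReal.ofReal (‖f (ε⁻¹ • x) • Sm (cell a) ε u x‖ ^ 2)
        = Fe x * ENNReal.ofReal (‖Sm (cell a) ε u x‖ ^ 2) := by
      rw [norm_smul, mul_pow, ENNReal.ofReal_mul (by positivity)]
    have hnorm : ‖Sm (cell a) ε u x‖
        = ((volume (cell a)).toReal)⁻¹ * ‖∫ z in cell a, u (x - ε • z)‖ := by
      rw [Sm, norm_smul, Real.norm_eq_abs, _root_.abs_of_nonneg (by positivity)]
    have hIb : ENNReal.ofReal ‖∫ z in cell a, u (x - ε • z)‖
        ≤ ∫⁻ z in cell a, χ (x - ε • z) := by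
      have h := enorm_integral_le_lintegral_enorm (μ := volume.restrict (cell a))
        (fun z => u (x - ε • z))
      rw [← lintegral_congr_ae (hslice x)]
      simpa [ofReal_norm] using h
    have hcs : (∫⁻ z in cell a, χ (x - ε • z)) ^ 2
        ≤ volume (cell a) * ∫⁻ z in cell a, χ (x - ε • z) ^ 2 := by
      have h := Aux6.lint_cs (volume.restrict (cell a)) _ hmz.aemeasurable
      rwa [Measure.restrict_apply_univ] at h
    have hSm : ENNReal.ofReal (‖Sm (cell a) ε u x‖ ^ 2)
        ≤ (volume (cell a))⁻¹ * ∫⁻ z in cell a, χ (x - ε • z) ^ 2 := by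
      rw [hnorm, mul_pow, ENNReal.ofReal_mul (by positivity),
        ENNReal.ofReal_pow (by positivity), ENNReal.ofReal_pow (norm_nonneg _), hcE]
      calc (volume (cell a))⁻¹ ^ 2 * ENNReal.ofReal ‖∫ z in cell a, u (x - ε • z)‖ ^ 2
          ≤ (volume (cell a))⁻¹ ^ 2 * ((∫⁻ z in cell a, χ (x - ε • z)) ^ 2) :=
            mul_le_mul_right (pow_le_pow_left' hIb 2) _
        _ ≤ (volume (cell a))⁻¹ ^ 2 * (volume (cell a) * ∫⁻ z in cell a, χ (x - ε • z) ^ 2) :=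
            mul_le_mul_right hcs _
        _ = (volume (cell a))⁻¹ * ∫⁻ z in cell a, χ (x - ε • z) ^ 2 := by
            rw [pow_two, mul_assoc, ← mul_assoc ((volume (cell a))⁻¹) (volume (cell a)),
              ENNReal.inv_mul_cancel hμ0 hμfin, one_mul]
    calc ENNReal.ofReal (‖f (ε⁻¹ • x) • Sm (cell a) ε u x‖ ^ 2)
        = Fe x * ENNReal.ofReal (‖Sm (cell a) ε u x‖ ^ 2) := e1
      _ ≤ Fe x * ((volume (cell a))⁻¹ * ∫⁻ z in cell a, χ (x - ε • z) ^ 2) :=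
          mul_le_mul_right hSm _
      _ = (volume (cell a))⁻¹ * (Fe x * ∫⁻ z in cell a, χ (x - ε • z) ^ 2) := by
          rw [mul_left_comm]
  -- main ENNReal chain
  have hsmul : ∀ (y z : Rd d), ε⁻¹ • (y + ε • z) = ε⁻¹ • y + z := by
    intro y z
    rw [smul_add, smul_smul, inv_mul_cancel₀ hεne, one_smul]
  have hmeas1 : AEMeasurable (Function.uncurry fun x z : Rd d => Fe x * χ (x - ε • z) ^ 2)
      ((volume : Measure (Rd d)).prod (volume.restrict (cell a))) := by
    refine Measurable.aemeasurable ?_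
    exact ((hFemeas.comp measurable_fst).mul
      ((hχmeas.comp (measurable_fst.sub (measurable_snd.const_smul ε))).pow_const 2))
  have hmeas2 : AEMeasurable (Function.uncurry fun z y : Rd d => gE (ε⁻¹ • y + z) * χ y ^ 2)
      ((volume.restrict (cell a)).prod (volume : Measure (Rd d))) := by
    refine Measurable.aemeasurable ?_
    exact ((hgEmeas.comp ((measurable_snd.const_smul ε⁻¹).add measurable_fst)).mul
      ((hχmeas.comp measurable_snd).pow_const 2))
  have key : ∫⁻ x, ENNReal.ofReal (‖f (ε⁻¹ • x) • Sm (cell a) ε u x‖ ^ 2)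
      ≤ (volume (cell a))⁻¹ * ((∫⁻ z in cell a, gE z) * ∫⁻ y, χ y ^ 2) := by
    calc ∫⁻ x, ENNReal.ofReal (‖f (ε⁻¹ • x) • Sm (cell a) ε u x‖ ^ 2)
        ≤ ∫⁻ x, (volume (cell a))⁻¹ * (Fe x * ∫⁻ z in cell a, χ (x - ε • z) ^ 2) :=
          lintegral_mono step1
      _ = (volume (cell a))⁻¹ * ∫⁻ x, Fe x * ∫⁻ z in cell a, χ (x - ε • z) ^ 2 :=
          lintegral_const_mul' _ _ (ENNReal.inv_ne_top.mpr hμ0)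
      _ = (volume (cell a))⁻¹ * ∫⁻ x, ∫⁻ z in cell a, Fe x * χ (x - ε • z) ^ 2 := by
          congr 1
          refine lintegral_congr fun x => ?_
          exact (lintegral_const_mul (Fe x)
            ((hχmeas.comp (measurable_const.sub (measurable_id.const_smul ε))).pow_const 2)).symm
      _ = (volume (cell a))⁻¹ * ∫⁻ z in cell a, ∫⁻ x, Fe x * χ (x - ε • z) ^ 2 := by
          congr 1
          exact lintegral_lintegral_swap hmeas1
      _ = (volume (cell a))⁻¹ * ∫⁻ z in cell a, ∫⁻ y, gE (ε⁻¹ • y + z) * χ y ^ 2 := by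
          congr 1
          refine lintegral_congr fun z => ?_
          rw [← lintegral_add_right_eq_self (fun x => Fe x * χ (x - ε • z) ^ 2) (ε • z)]
          refine lintegral_congr fun y => ?_
          simp only [add_sub_cancel_right, hFedef, hsmul y z]
      _ = (volume (cell a))⁻¹ * ∫⁻ y, ∫⁻ z in cell a, gE (ε⁻¹ • y + z) * χ y ^ 2 := by
          congr 1
          exact lintegral_lintegral_swap hmeas2
      _ = (volume (cell a))⁻¹ * ∫⁻ y, (∫⁻ z in cell a, gE z) * χ y ^ 2 := by
          congr 1
          refine lintegral_congr fun y => ?_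
          have hmz : Measurable fun z : Rd d => gE (ε⁻¹ • y + z) :=
            hgEmeas.comp (measurable_const.add measurable_id)
          calc ∫⁻ z in cell a, gE (ε⁻¹ • y + z) * χ y ^ 2
              = χ y ^ 2 * ∫⁻ z in cell a, gE (ε⁻¹ • y + z) := by
                rw [← lintegral_const_mul (χ y ^ 2) hmz]
                exact lintegral_congr fun z => mul_comm _ _
            _ = χ y ^ 2 * ∫⁻ z in cell a, gE z := by
                rw [Aux6.periodic_shift hd ha gE hgEper (ε⁻¹ • y)]
            _ = (∫⁻ z in cell a, gE z) * χ y ^ 2 := mul_comm _ _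
      _ = (volume (cell a))⁻¹ * ((∫⁻ z in cell a, gE z) * ∫⁻ y, χ y ^ 2) := by
          congr 1
          exact lintegral_const_mul _ (hχmeas.pow_const 2)
  -- identify the constants
  have hUe : ∫⁻ y, χ y ^ 2 ∂(volume : Measure (Rd d))
      = ENNReal.ofReal (∫ x, ‖u x‖ ^ 2) := by
    have h1 : ∫⁻ y, χ y ^ 2 ∂(volume : Measure (Rd d))
        = ∫⁻ y, ENNReal.ofReal (‖u y‖ ^ 2) ∂(volume : Measure (Rd d)) := by
      refine lintegral_congr_ae ?_
      filter_upwards [hχae] with x hx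
      rw [← hx, ← ENNReal.ofReal_pow (norm_nonneg _)]
    rw [h1, ← ofReal_integral_eq_lintegral_ofReal hu' (ae_of_all _ fun x => by positivity)]
  have hKe : ∫⁻ z in cell a, gE z = ENNReal.ofReal (∫ z in cell a, ‖f z‖ ^ 2) := by
    rw [← ofReal_integral_eq_lintegral_ofReal hfL2 (ae_of_all _ fun x => by positivity)]
  have hRHSne : (volume (cell a))⁻¹ *
      (ENNReal.ofReal (∫ z in cell a, ‖f z‖ ^ 2) * ENNReal.ofReal (∫ x, ‖u x‖ ^ 2)) ≠ ⊤ :=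
    ENNReal.mul_ne_top (ENNReal.inv_ne_top.mpr hμ0)
      (ENNReal.mul_ne_top ENNReal.ofReal_ne_top ENNReal.ofReal_ne_top)
  have hbound : l2sq Set.univ (fun x => f (ε⁻¹ • x) • Sm (cell a) ε u x)
      ≤ ((volume (cell a)).toReal)⁻¹ * ((∫ z in cell a, ‖f z‖ ^ 2) * ∫ x, ‖u x‖ ^ 2) := by
    have hrhs : (((volume (cell a))⁻¹ *
        (ENNReal.ofReal (∫ z in cell a, ‖f z‖ ^ 2) * ENNReal.ofReal (∫ x, ‖u x‖ ^ 2)))).toReal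
        = ((volume (cell a)).toReal)⁻¹ * ((∫ z in cell a, ‖f z‖ ^ 2) * ∫ x, ‖u x‖ ^ 2) := by
      rw [ENNReal.toReal_mul, ENNReal.toReal_mul, ENNReal.toReal_inv,
        ENNReal.toReal_ofReal hK0, ENNReal.toReal_ofReal hU0]
    by_cases hint : Integrable (fun x : Rd d => ‖f (ε⁻¹ • x) • Sm (cell a) ε u x‖ ^ 2) volume
    · have heq : l2sq Set.univ (fun x => f (ε⁻¹ • x) • Sm (cell a) ε u x)
          = (∫⁻ x, ENNReal.ofReal (‖f (ε⁻¹ • x) • Sm (cell a) ε u x‖ ^ 2)).toReal := by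
        rw [l2sq, Measure.restrict_univ,
          integral_eq_lintegral_of_nonneg_ae (ae_of_all _ fun x => by positivity)
            hint.aestronglyMeasurable]
      rw [heq, ← hrhs]
      refine ENNReal.toReal_mono hRHSne ?_
      rw [← hKe, ← hUe]
      exact key
    · rw [l2sq, Measure.restrict_univ, integral_undef hint]
      have h1 : (0:ℝ) ≤ ((volume (cell a)).toReal)⁻¹ := by positivity
      exact mul_nonneg h1 (mul_nonneg hK0 hU0)
  -- conclude
  rw [l2n, l2n]
  have hl2u : l2sq Set.univ u = ∫ x, ‖u x‖ ^ 2 := by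
    rw [l2sq, Measure.restrict_univ]
  rw [hl2u]
  calc Real.sqrt (l2sq Set.univ (fun x => f (ε⁻¹ • x) • Sm (cell a) ε u x))
      ≤ Real.sqrt (((volume (cell a)).toReal)⁻¹ * ((∫ z in cell a, ‖f z‖ ^ 2) * ∫ x, ‖u x‖ ^ 2)) :=
        Real.sqrt_le_sqrt hbound
    _ = Real.sqrt (((volume (cell a)).toReal)⁻¹ * ∫ x in cell a, ‖f x‖ ^ 2) *
        Real.sqrt (∫ x, ‖u x‖ ^ 2) := by
      rw [← mul_assoc, Real.sqrt_mul (by positivity)]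

end PaperHomog
end
end

section
/- Under the assumptions of the boundary-layer lemma (Lemma 3.3), let f be a Γ-periodic function on ℝ^d with f ∈ L²(Ω). Then for every u ∈ H¹(ℝ^d;ℂ^m) and 0 < ε ≤ ε₁ = ε₀(1+r₁)^{-1}, ∫_{(∂O)_ε} |f(x/ε)|² |(S_ε u)(x)|² dx ≤ β_* ε |Ω|^{-1} ‖f‖²_{L²(Ω)} ‖u‖_{H¹(ℝ^d)} ‖u‖_{L²(ℝ^d)}, where β_* = β(1+r₁) and 2r₁ = diam Ω. -/
noncomputable section

open MeasureTheory Complex Real Set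

namespace PaperHomog

open scoped ENNReal Pointwise NNReal

open Pointwise in
lemma aux_cell_eq {d : ℕ} (a : Fin d → Rd d)
    (b : Module.Basis (Fin d) ℝ (Rd d)) (hb : ⇑b = a) :
    cell a = {x : Rd d | ∀ i, b.repr x i ∈ Set.Ioo (-(2⁻¹) : ℝ) 2⁻¹} := by
  ext x
  constructor
  · rintro ⟨τ, hτ, rfl⟩ i
    rw [← hb]
    have h1 := b.repr_sum_self τ
    rw [h1]
    have := abs_lt.mp (hτ i)
    constructor <;> [linarith [this.1]; linarith [this.2]]
  · intro hx
    refine ⟨fun j => b.repr x j, fun j => ?_, ?_⟩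
    · have := hx j
      rw [abs_lt]
      constructor <;> [linarith [this.1]; linarith [this.2]]
    · rw [← hb]
      exact (b.sum_repr x).symm

open Pointwise in
lemma aux_levelset_null {d : ℕ} (b : Module.Basis (Fin d) ℝ (Rd d)) (i : Fin d) (c : ℝ) :
    volume {x : Rd d | b.repr x i = c} = 0 := by
  have hker : LinearMap.ker (b.coord i) ≠ ⊤ := by
    intro h
    have : b.coord i (b i) = 0 := by
      rw [LinearMap.ker_eq_top] at h; simp [h]
    simp [Module.Basis.coord_apply] at this
  have h0 : volume ((LinearMap.ker (b.coord i) : Submodule ℝ (Rd d)) : Set (Rd d)) = 0 :=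
    MeasureTheory.Measure.addHaar_submodule volume _ hker
  have hset : {x : Rd d | b.repr x i = c} =
      (c • b i) +ᵥ ((LinearMap.ker (b.coord i) : Submodule ℝ (Rd d)) : Set (Rd d)) := by
    ext x
    rw [Set.mem_vadd_set_iff_neg_vadd_mem]
    simp only [vadd_eq_add, SetLike.mem_coe, LinearMap.mem_ker, Module.Basis.coord_apply, mem_setOf_eq,
      map_add, map_neg, _root_.map_smul, Module.Basis.repr_self, Finsupp.coe_add, Finsupp.coe_neg,
      Finsupp.coe_smul, Pi.add_apply, Pi.neg_apply, Pi.smul_apply, Finsupp.single_eq_same,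
      smul_eq_mul, mul_one]
    constructor
    · intro h; rw [h]; ring
    · intro h; linarith
  rw [hset]
  simpa using h0

open Pointwise in
lemma aux_lint_translate {d : ℕ} (p : Rd d → ℝ≥0∞) (s : Rd d) (A : Set (Rd d)) :
    ∫⁻ z in A, p (s + z) = ∫⁻ w in s +ᵥ A, p w := by
  have hmp : MeasurePreserving (fun z : Rd d => s + z) volume volume :=
    measurePreserving_add_left volume s
  have hemb : MeasurableEmbedding (fun z : Rd d => s + z) :=
    (MeasurableEquiv.addLeft s).measurableEmbedding
  have := hmp.setLIntegral_comp_emb hemb p A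
  rw [this]
  congr 1

open Pointwise in
lemma aux_periodic_shift {d : ℕ} (hd : 0 < d) (a : Fin d → Rd d)
    (ha : LinearIndependent ℝ a)
    (p : Rd d → ℝ≥0∞) (hp : ∀ γ ∈ lattice a, ∀ x, p (x + γ) = p x) (s : Rd d) :
    ∫⁻ z in cell a, p (s + z) = ∫⁻ z in cell a, p z := by
  haveI : Nonempty (Fin d) := ⟨⟨0, hd⟩⟩
  set b : Module.Basis (Fin d) ℝ (Rd d) := basisOfLinearIndependentOfCardEqFinrank ha (by simp) with hbdef
  have hb : ⇑b = a := coe_basisOfLinearIndependentOfCardEqFinrank ha _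
  set G := (Submodule.span ℤ (Set.range (⇑b))).toAddSubgroup with hGdef
  have hFD : IsAddFundamentalDomain G (ZSpan.fundamentalDomain b) volume :=
    ZSpan.isAddFundamentalDomain' b volume
  haveI : Countable G := (inferInstance : Countable (Submodule.span ℤ (Set.range ⇑b)))
  have hinv : ∀ (g : G) (x : Rd d), p (g +ᵥ x) = p x := by
    intro g x
    obtain ⟨c, hc⟩ := (Submodule.mem_span_range_iff_exists_fun ℤ).mp g.2
    have hγ : (g : Rd d) ∈ lattice a :=
      ⟨c, by rw [← hc, ← hb]; congr 1; ext j; rw [Int.cast_smul_eq_zsmul]⟩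
    have := hp _ hγ x
    rw [← this]
    show p ((g : Rd d) + x) = _
    rw [add_comm]
  haveI : VAddCommClass (Rd d) G (Rd d) := ⟨fun x g y => by
    show x + ((g : Rd d) + y) = (g : Rd d) + (x + y); abel⟩
  have hFDt : ∀ c : Rd d, IsAddFundamentalDomain G (c +ᵥ ZSpan.fundamentalDomain b) volume :=
    fun c => hFD.vadd_of_comm c
  set c₀ : Rd d := -(∑ j : Fin d, (2⁻¹ : ℝ) • b j) with hc₀
  have htrans_mem : ∀ x : Rd d, x ∈ c₀ +ᵥ ZSpan.fundamentalDomain b ↔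
      ∀ i, b.repr x i ∈ Set.Ico (-(2⁻¹) : ℝ) 2⁻¹ := by
    intro x
    rw [Set.mem_vadd_set_iff_neg_vadd_mem]
    have hrepr : ∀ i, b.repr (-c₀ +ᵥ x) i = b.repr x i + 2⁻¹ := by
      intro i
      rw [hc₀]
      simp only [vadd_eq_add, neg_neg, map_add]
      have h1 := b.repr_sum_self (fun _ => (2⁻¹ : ℝ))
      have : b.repr (∑ j : Fin d, (2⁻¹:ℝ) • b j) i = 2⁻¹ := by rw [h1]
      simp only [Finsupp.coe_add, Pi.add_apply, this]
      ring
    constructor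
    · intro h i
      have := h i
      rw [hrepr i] at this
      simp only [Set.mem_Ico] at this ⊢
      constructor <;> [linarith [this.1]; linarith [this.2]]
    · intro h i
      show b.repr (-c₀ +ᵥ x) i ∈ Set.Ico (0:ℝ) 1
      rw [hrepr i]
      have := h i
      simp only [Set.mem_Ico] at this ⊢
      constructor <;> [linarith [this.1]; linarith [this.2]]
  have hae : (cell a : Set (Rd d)) =ᵐ[volume] (c₀ +ᵥ ZSpan.fundamentalDomain b) := by
    rw [Filter.eventuallyEq_set]
    have hnull : volume (⋃ i : Fin d, {x : Rd d | b.repr x i = -(2⁻¹ : ℝ)}) = 0 :=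
      measure_iUnion_null fun i => aux_levelset_null b i _
    refine (measure_eq_zero_iff_ae_notMem.mp hnull).mono ?_
    intro x hx
    simp only [mem_iUnion, mem_setOf_eq, not_exists] at hx
    rw [aux_cell_eq a b hb, htrans_mem x]
    simp only [mem_setOf_eq]
    constructor
    · intro h i
      have := h i
      simp only [Set.mem_Ioo] at this
      exact ⟨le_of_lt this.1, this.2⟩
    · intro h i
      have h1 := h i
      simp only [Set.mem_Ico] at h1
      have : b.repr x i ≠ -(2⁻¹:ℝ) := hx i
      simp only [Set.mem_Ioo]
      exact ⟨lt_of_le_of_ne h1.1 (Ne.symm this), h1.2⟩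
  calc ∫⁻ z in cell a, p (s + z)
      = ∫⁻ z in c₀ +ᵥ ZSpan.fundamentalDomain b, p (s + z) := setLIntegral_congr hae
    _ = ∫⁻ w in s +ᵥ (c₀ +ᵥ ZSpan.fundamentalDomain b), p w := aux_lint_translate _ _ _
    _ = ∫⁻ w in (s + c₀) +ᵥ ZSpan.fundamentalDomain b, p w := by rw [vadd_vadd]
    _ = ∫⁻ w in c₀ +ᵥ ZSpan.fundamentalDomain b, p w :=
        (hFDt (s + c₀)).setLIntegral_eq (hFDt c₀) p hinv
    _ = ∫⁻ z in cell a, p z := (setLIntegral_congr hae).symm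

lemma aux_lint_cs {α : Type*} [MeasurableSpace α] (μ : Measure α) (g : α → ℝ≥0∞)
    (hg : AEMeasurable g μ) :
    (∫⁻ x, g x ∂μ) ^ 2 ≤ μ Set.univ * ∫⁻ x, (g x) ^ 2 ∂μ := by
  have h := ENNReal.lintegral_mul_norm_pow_le (μ := μ) (f := fun x => (g x) ^ 2)
    (g := fun _ => (1 : ℝ≥0∞)) (hg.pow_const 2) aemeasurable_const
    (by norm_num : (0:ℝ) ≤ 2⁻¹) (by norm_num : (0:ℝ) ≤ 2⁻¹) (by norm_num)
  have hsimp : ∀ x : ℝ≥0∞, (x ^ 2) ^ (2⁻¹ : ℝ) = x := by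
    intro x
    rw [← ENNReal.rpow_natCast x 2, ← ENNReal.rpow_mul]
    norm_num
  have hsimp2 : ∀ x : ℝ≥0∞, (x ^ (2⁻¹ : ℝ)) ^ (2 : ℕ) = x := by
    intro x
    rw [← ENNReal.rpow_natCast _ 2, ← ENNReal.rpow_mul]
    norm_num
  simp only [hsimp, ENNReal.one_rpow, mul_one, lintegral_const, one_mul] at h
  have h2 := pow_le_pow_left' h 2
  calc (∫⁻ x, g x ∂μ) ^ 2
      ≤ ((∫⁻ x, g x ^ 2 ∂μ) ^ (2⁻¹:ℝ) * (μ Set.univ) ^ (2⁻¹:ℝ)) ^ 2 := h2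
    _ = (∫⁻ x, g x ^ 2 ∂μ) * μ Set.univ := by rw [mul_pow, hsimp2, hsimp2]
    _ = μ Set.univ * ∫⁻ x, g x ^ 2 ∂μ := mul_comm _ _

lemma aux_cell_norm_le {d : ℕ} (a : Fin d → Rd d) :
    ∀ z ∈ cell a, ‖z‖ ≤ Metric.diam (cell a) / 2 := by
  have hbd : Bornology.IsBounded (cell a) := by
    rw [isBounded_iff_forall_norm_le]
    refine ⟨∑ j : Fin d, ‖a j‖, ?_⟩
    rintro x ⟨τ, hτ, rfl⟩
    calc ‖∑ j : Fin d, τ j • a j‖ ≤ ∑ j : Fin d, ‖τ j • a j‖ := norm_sum_le _ _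
      _ ≤ ∑ j : Fin d, ‖a j‖ := by
          refine Finset.sum_le_sum fun j _ => ?_
          rw [norm_smul, Real.norm_eq_abs]
          have h1 : |τ j| ≤ 1 := by have := hτ j; have := abs_nonneg (τ j); linarith
          calc |τ j| * ‖a j‖ ≤ 1 * ‖a j‖ :=
                mul_le_mul_of_nonneg_right h1 (norm_nonneg _)
            _ = ‖a j‖ := one_mul _
  intro z hz
  obtain ⟨τ, hτ, rfl⟩ := hz
  have hneg : -(∑ j : Fin d, τ j • a j) ∈ cell a := by
    refine ⟨fun j => -(τ j), fun j => by simpa [abs_neg] using hτ j, ?_⟩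
    rw [← Finset.sum_neg_distrib]
    congr 1; ext j; rw [neg_smul]
  have hmem : (∑ j : Fin d, τ j • a j) ∈ cell a := ⟨τ, hτ, rfl⟩
  have hd := Metric.dist_le_diam_of_mem hbd hmem hneg
  rw [dist_eq_norm, sub_neg_eq_add] at hd
  have : ‖(∑ j : Fin d, τ j • a j) + (∑ j : Fin d, τ j • a j)‖
      = 2 * ‖∑ j : Fin d, τ j • a j‖ := by
    rw [← two_smul ℝ, norm_smul, Real.norm_ofNat]
  rw [this] at hd
  linarith

open Pointwise in
lemma aux_cell_measurable {d : ℕ} (hd : 0 < d) (a : Fin d → Rd d)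
    (ha : LinearIndependent ℝ a) : MeasurableSet (cell a) := by
  haveI : Nonempty (Fin d) := ⟨⟨0, hd⟩⟩
  set b : Module.Basis (Fin d) ℝ (Rd d) := basisOfLinearIndependentOfCardEqFinrank ha (by simp) with hbdef
  have hb : ⇑b = a := coe_basisOfLinearIndependentOfCardEqFinrank ha _
  rw [aux_cell_eq a b hb]
  have : {x : Rd d | ∀ i, b.repr x i ∈ Set.Ioo (-(2⁻¹) : ℝ) 2⁻¹}
      = ⋂ i : Fin d, (fun x : Rd d => b.repr x i) ⁻¹' (Set.Ioo (-(2⁻¹) : ℝ) 2⁻¹) := by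
    ext x; simp [Set.mem_iInter]
  rw [this]
  refine MeasurableSet.iInter fun i => ?_
  have hcont : Continuous (fun x : Rd d => b.repr x i) := by
    have : (fun x : Rd d => b.repr x i) = ⇑(b.coord i) := by
      ext x; simp [Module.Basis.coord_apply]
    rw [this]
    exact (b.coord i).continuous_of_finiteDimensional
  exact hcont.measurable measurableSet_Ioo


theorem statement9
    (d mm : ℕ) (hd : 0 < d)
    (a : Fin d → Rd d) (ha : LinearIndependent ℝ a)
    (hvol : 0 < (volume (cell a)).toReal)
    (O : Set (Rd d)) (hOopen : IsOpen O) (hObd : Bornology.IsBounded O)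
    (hOne : O.Nonempty)
    (ε₀ : ℝ) (hε₀ : 0 < ε₀) (hrect : RectC1 hd O ε₀)
    (β : ℝ) (hβpos : 0 < β)
    (hβ : ∀ (k : ℕ) (u : Rd d → Vc k), InH1 Set.univ u → ∀ ε : ℝ, 0 < ε → ε ≤ ε₀ →
      (∫ x in Metric.thickening ε (frontier O), ‖u x‖ ^ 2) ≤
        β * ε * h1n Set.univ u * l2n Set.univ u)
    (f : Rd d → ℂ) (hfmeas : Measurable f) (hfper : GammaPeriodic a f)
    (hfL2 : Integrable (fun x => ‖f x‖ ^ 2) (volume.restrict (cell a)))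
    (u : Rd d → Vc mm) (hu : InH1 Set.univ u)
    (ε : ℝ) (hε : 0 < ε) (hεle : ε ≤ ε₀ / (1 + Metric.diam (cell a) / 2)) :
    (∫ x in Metric.thickening ε (frontier O),
        ‖f (ε⁻¹ • x)‖ ^ 2 * ‖Sm (cell a) ε u x‖ ^ 2) ≤
      β * (1 + Metric.diam (cell a) / 2) * ε * ((volume (cell a)).toReal)⁻¹ *
        (∫ x in cell a, ‖f x‖ ^ 2) * h1n Set.univ u * l2n Set.univ u := by
  classical
  borelize (Vc mm)
  -- abbreviations
  set Ω : Set (Rd d) := cell a with hΩdef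
  set r₁ : ℝ := Metric.diam (cell a) / 2 with hr₁def
  have hr₁0 : 0 ≤ r₁ := by
    rw [hr₁def]; have := Metric.diam_nonneg (s := cell a); linarith
  set c1 : ℝ := 1 + r₁ with hc1def
  have hc1 : 0 < c1 := by rw [hc1def]; linarith
  set ε₁ : ℝ := ε * c1 with hε₁def
  have hε₁pos : 0 < ε₁ := mul_pos hε hc1
  have hε₁le : ε₁ ≤ ε₀ := by
    rw [hε₁def]
    calc ε * c1 ≤ (ε₀ / c1) * c1 := mul_le_mul_of_nonneg_right hεle hc1.le
      _ = ε₀ := div_mul_cancel₀ _ hc1.ne'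
  set T1 : Set (Rd d) := Metric.thickening ε (frontier O) with hT1def
  set T2 : Set (Rd d) := Metric.thickening ε₁ (frontier O) with hT2def
  have hT1meas : MeasurableSet T1 := Metric.isOpen_thickening.measurableSet
  have hT2meas : MeasurableSet T2 := Metric.isOpen_thickening.measurableSet
  have hΩmeas : MeasurableSet Ω := aux_cell_measurable hd a ha
  set μΩ : ℝ≥0∞ := volume Ω with hμΩdef
  have hμpos : 0 < μΩ ∧ μΩ < ⊤ := ENNReal.toReal_pos_iff.mp hvol
  have hμ0 : μΩ ≠ 0 := hμpos.1.ne'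
  have hμtop : μΩ ≠ ⊤ := hμpos.2.ne
  set V : ℝ := (volume (cell a)).toReal with hVdef
  have hVpos : 0 < V := hvol
  haveI hfinΩ : IsFiniteMeasure (volume.restrict Ω) :=
    ⟨by rw [Measure.restrict_apply_univ]; exact hμpos.2⟩
  have hucont : Continuous u := by
    rw [continuous_iff_continuousAt]
    exact fun x => (hu.1 x (Set.mem_univ x)).continuousAt
  have hui : Integrable (fun x => ‖u x‖ ^ 2) volume := by
    have := hu.2.1; rwa [Measure.restrict_univ] at this
  have hnorm : ∀ z ∈ Ω, ‖z‖ ≤ r₁ := by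
    intro z hz; exact aux_cell_norm_le a z hz
  -- membership transfer
  have hTmem : ∀ x ∈ T1, ∀ z ∈ Ω, x - ε • z ∈ T2 := by
    intro x hx z hz
    rw [hT1def, Metric.mem_thickening_iff_infEdist_lt] at hx
    rw [hT2def, Metric.mem_thickening_iff_infEdist_lt]
    have h1 : EMetric.infEdist (x - ε • z) (frontier O)
        ≤ EMetric.infEdist x (frontier O) + edist (x - ε • z) x :=
      EMetric.infEdist_le_infEdist_add_edist
    have h2 : edist (x - ε • z) x = ENNReal.ofReal ‖ε • z‖ := by
      rw [edist_dist, dist_eq_norm]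
      congr 1
      rw [sub_sub_cancel_left, norm_neg]
    have h3 : ‖ε • z‖ ≤ ε * r₁ := by
      rw [norm_smul, Real.norm_eq_abs, abs_of_pos hε]
      exact mul_le_mul_of_nonneg_left (hnorm z hz) hε.le
    calc EMetric.infEdist (x - ε • z) (frontier O)
        ≤ EMetric.infEdist x (frontier O) + ENNReal.ofReal (ε * r₁) := by
          refine h1.trans (add_le_add le_rfl ?_)
          rw [h2]; exact ENNReal.ofReal_le_ofReal h3
      _ < ENNReal.ofReal ε + ENNReal.ofReal (ε * r₁) :=
          ENNReal.add_lt_add_right ENNReal.ofReal_ne_top hx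
      _ = ENNReal.ofReal ε₁ := by
          rw [← ENNReal.ofReal_add hε.le (mul_nonneg hε.le hr₁0)]
          congr 1
          rw [hε₁def, hc1def]; ring
  -- basic ennreal functions
  set P : Rd d → ℝ≥0∞ := fun x => ((‖f (ε⁻¹ • x)‖₊ : ℝ≥0∞)) ^ 2 with hPdef
  set hfn : Rd d → ℝ≥0∞ := T2.indicator (fun y => ((‖u y‖₊ : ℝ≥0∞)) ^ 2) with hhdef
  have hPm : Measurable P :=
    ((hfmeas.comp (measurable_const_smul ε⁻¹)).nnnorm.coe_nnreal_ennreal).pow_const 2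
  have hhm : Measurable hfn :=
    ((hucont.measurable.nnnorm.coe_nnreal_ennreal).pow_const 2).indicator hT2meas
  have hPne : ∀ x, P x ≠ ⊤ := fun x => ENNReal.pow_ne_top ENNReal.coe_ne_top
  have hhne : ∀ y, hfn y ≠ ⊤ := fun y =>
    ne_top_of_le_ne_top (ENNReal.pow_ne_top ENNReal.coe_ne_top)
      (Set.indicator_le_self _ _ y)
  have hμinv_ne : μΩ⁻¹ ≠ ⊤ := ENNReal.inv_ne_top.mpr hμ0
  have hocV : ENNReal.ofReal (V⁻¹) = μΩ⁻¹ := by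
    rw [ENNReal.ofReal_inv_of_pos hVpos, hVdef, ENNReal.ofReal_toReal hμtop]
  -- pointwise Cauchy-Schwarz bound
  have hpt : ∀ x ∈ T1, ((‖Sm (cell a) ε u x‖₊ : ℝ≥0∞)) ^ 2
      ≤ μΩ⁻¹ * ∫⁻ z in Ω, hfn (x - ε • z) := by
    intro x hx
    have e1 : ((‖Sm (cell a) ε u x‖₊ : ℝ≥0∞))
        ≤ ENNReal.ofReal (V⁻¹) * ∫⁻ z in Ω, ((‖u (x - ε • z)‖₊ : ℝ≥0∞)) := by
      show ((‖((volume (cell a)).toReal)⁻¹ • ∫ z in cell a, u (x - ε • z)‖₊ : ℝ≥0∞)) ≤ _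
      rw [nnnorm_smul, ENNReal.coe_mul]
      refine mul_le_mul' (le_of_eq ?_) (enorm_integral_le_lintegral_enorm _)
      exact Real.enorm_eq_ofReal (inv_nonneg.2 ENNReal.toReal_nonneg)
    have e2 : ((‖Sm (cell a) ε u x‖₊ : ℝ≥0∞)) ^ 2
        ≤ (ENNReal.ofReal (V⁻¹)) ^ 2 * (∫⁻ z in Ω, ((‖u (x - ε • z)‖₊ : ℝ≥0∞))) ^ 2 := by
      rw [← mul_pow]
      exact pow_le_pow_left' e1 2
    have e3 : (∫⁻ z in Ω, ((‖u (x - ε • z)‖₊ : ℝ≥0∞))) ^ 2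
        ≤ μΩ * ∫⁻ z in Ω, ((‖u (x - ε • z)‖₊ : ℝ≥0∞)) ^ 2 := by
      have := aux_lint_cs (volume.restrict Ω)
        (fun z => ((‖u (x - ε • z)‖₊ : ℝ≥0∞)))
        ((hucont.comp ((continuous_const.sub (continuous_id.const_smul ε)))).measurable.nnnorm.coe_nnreal_ennreal).aemeasurable
      rwa [Measure.restrict_apply_univ] at this
    have e4 : ∫⁻ z in Ω, ((‖u (x - ε • z)‖₊ : ℝ≥0∞)) ^ 2
        = ∫⁻ z in Ω, hfn (x - ε • z) := by
      refine setLIntegral_congr_fun hΩmeas (fun z hz => ?_)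
      rw [hhdef, Set.indicator_of_mem (hTmem x hx z hz)]
    calc ((‖Sm (cell a) ε u x‖₊ : ℝ≥0∞)) ^ 2
        ≤ (ENNReal.ofReal (V⁻¹)) ^ 2 * (∫⁻ z in Ω, ((‖u (x - ε • z)‖₊ : ℝ≥0∞))) ^ 2 := e2
      _ ≤ (ENNReal.ofReal (V⁻¹)) ^ 2 * (μΩ * ∫⁻ z in Ω, ((‖u (x - ε • z)‖₊ : ℝ≥0∞)) ^ 2) :=
          mul_le_mul_right e3 _
      _ = μΩ⁻¹ * ∫⁻ z in Ω, ((‖u (x - ε • z)‖₊ : ℝ≥0∞)) ^ 2 := by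
          rw [hocV, pow_two, mul_assoc, ← mul_assoc μΩ⁻¹ μΩ,
            ENNReal.inv_mul_cancel hμ0 hμtop, one_mul]
      _ = μΩ⁻¹ * ∫⁻ z in Ω, hfn (x - ε • z) := by rw [e4]
  -- the f-integral quantities
  set Cfr : ℝ := ∫ x in cell a, ‖f x‖ ^ 2 with hCfrdef
  set Cf : ℝ≥0∞ := ∫⁻ z in Ω, ((‖f z‖₊ : ℝ≥0∞)) ^ 2 with hCfdef
  have hCf_eq : Cf = ENNReal.ofReal Cfr := by
    rw [hCfdef, hCfrdef, ofReal_integral_eq_lintegral_ofReal hfL2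
      (Filter.Eventually.of_forall fun x => sq_nonneg _)]
    refine lintegral_congr fun z => ?_
    rw [ENNReal.ofReal_pow (norm_nonneg _), ofReal_norm, enorm_eq_nnnorm]
  have hCfne : Cf ≠ ⊤ := by rw [hCf_eq]; exact ENNReal.ofReal_ne_top
  -- periodicity
  have hper : ∀ y : Rd d, (∫⁻ z in Ω, P (y + ε • z)) = Cf := by
    intro y
    have hcoords : ∀ z : Rd d, ε⁻¹ • (y + ε • z) = ε⁻¹ • y + z := by
      intro z
      rw [smul_add, smul_smul, inv_mul_cancel₀ hε.ne', one_smul]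
    have hp : ∀ γ ∈ lattice a, ∀ x : Rd d,
        ((‖f (x + γ)‖₊ : ℝ≥0∞)) ^ 2 = ((‖f x‖₊ : ℝ≥0∞)) ^ 2 := by
      intro γ hγ x; rw [hfper γ hγ x]
    have := aux_periodic_shift hd a ha (fun w => ((‖f w‖₊ : ℝ≥0∞)) ^ 2) hp (ε⁻¹ • y)
    calc (∫⁻ z in Ω, P (y + ε • z))
        = ∫⁻ z in cell a, ((‖f (ε⁻¹ • y + z)‖₊ : ℝ≥0∞)) ^ 2 := by
          refine lintegral_congr fun z => ?_
          rw [hPdef]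
          simp only
          rw [hcoords z]
      _ = ∫⁻ z in cell a, ((‖f z‖₊ : ℝ≥0∞)) ^ 2 := this
      _ = Cf := rfl
  -- boundary layer estimate for u
  have hhint : ∫⁻ y, hfn y ≤ ENNReal.ofReal (β * ε₁ * h1n Set.univ u * l2n Set.univ u) := by
    rw [hhdef, lintegral_indicator hT2meas]
    have heq : ∫⁻ y in T2, ((‖u y‖₊ : ℝ≥0∞)) ^ 2
        = ENNReal.ofReal (∫ y in T2, ‖u y‖ ^ 2) := by
      rw [ofReal_integral_eq_lintegral_ofReal hui.integrableOn
        (Filter.Eventually.of_forall fun x => sq_nonneg _)]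
      refine lintegral_congr fun y => ?_
      rw [ENNReal.ofReal_pow (norm_nonneg _), ofReal_norm, enorm_eq_nnnorm]
    rw [heq]
    exact ENNReal.ofReal_le_ofReal (hβ mm u hu ε₁ hε₁pos hε₁le)
  -- product measurability for Tonelli
  have hm1 : AEMeasurable (Function.uncurry fun x z => P x * hfn (x - ε • z))
      (volume.prod (volume.restrict Ω)) := by
    exact ((hPm.comp measurable_fst).mul
      (hhm.comp (measurable_fst.sub (measurable_snd.const_smul ε)))).aemeasurable
  have hm2 : AEMeasurable (Function.uncurry fun z y => P (y + ε • z) * hfn y)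
      ((volume.restrict Ω).prod volume) := by
    exact ((hPm.comp (measurable_snd.add (measurable_fst.const_smul ε))).mul
      (hhm.comp measurable_snd)).aemeasurable
  -- main chain
  set RHS : ℝ := β * c1 * ε * V⁻¹ * Cfr * h1n Set.univ u * l2n Set.univ u with hRHSdef
  have hCfr0 : 0 ≤ Cfr := by
    rw [hCfrdef]; exact integral_nonneg fun x => sq_nonneg _
  have hβs0 : 0 ≤ β * ε₁ * h1n Set.univ u * l2n Set.univ u := by
    have h1 : 0 ≤ h1n Set.univ u := Real.sqrt_nonneg _
    have h2 : 0 ≤ l2n Set.univ u := Real.sqrt_nonneg _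
    positivity
  have key : (∫⁻ x in T1, P x * ((‖Sm (cell a) ε u x‖₊ : ℝ≥0∞)) ^ 2)
      ≤ ENNReal.ofReal RHS := by
    calc (∫⁻ x in T1, P x * ((‖Sm (cell a) ε u x‖₊ : ℝ≥0∞)) ^ 2)
        ≤ μΩ⁻¹ * ∫⁻ x in T1, ∫⁻ z in Ω, P x * hfn (x - ε • z) := by
          rw [← lintegral_const_mul' _ _ hμinv_ne]
          refine setLIntegral_mono' hT1meas fun x hx => ?_
          calc P x * ((‖Sm (cell a) ε u x‖₊ : ℝ≥0∞)) ^ 2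
              ≤ P x * (μΩ⁻¹ * ∫⁻ z in Ω, hfn (x - ε • z)) :=
                mul_le_mul_right (hpt x hx) _
            _ = μΩ⁻¹ * (P x * ∫⁻ z in Ω, hfn (x - ε • z)) := by ring
            _ = μΩ⁻¹ * ∫⁻ z in Ω, P x * hfn (x - ε • z) := by
                rw [lintegral_const_mul' _ _ (hPne x)]
      _ ≤ μΩ⁻¹ * ∫⁻ x, ∫⁻ z in Ω, P x * hfn (x - ε • z) :=
          mul_le_mul_right (setLIntegral_le_lintegral _ _) _
      _ = μΩ⁻¹ * ∫⁻ z in Ω, ∫⁻ x, P x * hfn (x - ε • z) := by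
          rw [lintegral_lintegral_swap hm1]
      _ = μΩ⁻¹ * ∫⁻ z in Ω, ∫⁻ y, P (y + ε • z) * hfn y := by
          congr 1
          refine lintegral_congr fun z => ?_
          rw [← lintegral_add_right_eq_self (fun x => P x * hfn (x - ε • z)) (ε • z)]
          exact lintegral_congr fun y => by rw [add_sub_cancel_right]
      _ = μΩ⁻¹ * ∫⁻ y, ∫⁻ z in Ω, P (y + ε • z) * hfn y := by
          rw [lintegral_lintegral_swap hm2]
      _ = μΩ⁻¹ * ∫⁻ y, Cf * hfn y := by
          congr 1
          refine lintegral_congr fun y => ?_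
          rw [lintegral_mul_const' _ _ (hhne y), hper y, mul_comm]
      _ = μΩ⁻¹ * (Cf * ∫⁻ y, hfn y) := by rw [lintegral_const_mul' _ _ hCfne]
      _ ≤ μΩ⁻¹ * (Cf * ENNReal.ofReal (β * ε₁ * h1n Set.univ u * l2n Set.univ u)) :=
          mul_le_mul_right (mul_le_mul_right hhint _) _
      _ = ENNReal.ofReal RHS := by
          rw [← hocV, hCf_eq, ← ENNReal.ofReal_mul hCfr0, ← ENNReal.ofReal_mul
            (inv_nonneg.2 hVpos.le)]
          congr 1
          rw [hRHSdef, hε₁def]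
          ring
  -- convert the Bochner integral to a lintegral
  have hSsm : StronglyMeasurable (fun x : Rd d => ∫ z in cell a, u (x - ε • z)) := by
    have hcont2 : Continuous (fun p : Rd d × Rd d => u (p.1 - ε • p.2)) :=
      hucont.comp (continuous_fst.sub (continuous_snd.const_smul ε))
    exact hcont2.stronglyMeasurable.integral_prod_right'
  have hSmm : Measurable (fun x : Rd d => Sm (cell a) ε u x) := by
    exact hSsm.measurable.const_smul ((volume (cell a)).toReal)⁻¹
  have hmeasR : AEStronglyMeasurable
      (fun x => ‖f (ε⁻¹ • x)‖ ^ 2 * ‖Sm (cell a) ε u x‖ ^ 2) (volume.restrict T1) := by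
    refine Measurable.aestronglyMeasurable ?_
    exact (((hfmeas.comp (measurable_const_smul ε⁻¹)).norm.pow_const 2).mul
      ((hSmm.norm).pow_const 2))
  have hint_eq : (∫ x in T1, ‖f (ε⁻¹ • x)‖ ^ 2 * ‖Sm (cell a) ε u x‖ ^ 2)
      = (∫⁻ x in T1, P x * ((‖Sm (cell a) ε u x‖₊ : ℝ≥0∞)) ^ 2).toReal := by
    rw [integral_eq_lintegral_of_nonneg_ae
      (Filter.Eventually.of_forall fun x => mul_nonneg (sq_nonneg _) (sq_nonneg _)) hmeasR]
    congr 1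
    refine lintegral_congr fun x => ?_
    rw [ENNReal.ofReal_mul (sq_nonneg _), ENNReal.ofReal_pow (norm_nonneg _),
      ENNReal.ofReal_pow (norm_nonneg _), ofReal_norm, enorm_eq_nnnorm,
      ofReal_norm, enorm_eq_nnnorm]
  have hRHS0 : 0 ≤ RHS := by
    rw [hRHSdef]
    have h1 : 0 ≤ h1n Set.univ u := Real.sqrt_nonneg _
    have h2 : 0 ≤ l2n Set.univ u := Real.sqrt_nonneg _
    have h3 : 0 ≤ V⁻¹ := inv_nonneg.2 hVpos.le
    positivity
  have hfinal := ENNReal.toReal_le_of_le_ofReal hRHS0 key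
  rw [← hint_eq] at hfinal
  calc (∫ x in T1, ‖f (ε⁻¹ • x)‖ ^ 2 * ‖Sm (cell a) ε u x‖ ^ 2) ≤ RHS := hfinal
    _ = β * (1 + Metric.diam (cell a) / 2) * ε * ((volume (cell a)).toReal)⁻¹ *
        (∫ x in cell a, ‖f x‖ ^ 2) * h1n Set.univ u * l2n Set.univ u := by
        rw [hRHSdef, hc1def, hr₁def, hVdef, hCfrdef]

end PaperHomog
end
end
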